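/- Let Γ : ℝⁿ → (functions (Fin n)³ → ℝ) be smooth functions Γˡ_is satisfying the Riccati PDE system ∂_p Γˡ_is + Σ_m Γˡ_pm Γᵐ_is = 0 for all indices p,l,i,s. Then the curvature components Rˡ_ijk = ∂_j Γˡ_ik − ∂_k Γˡ_ij + Σ_s (Γˡ_js Γˢ_ik − Γˡ_ks Γˢ_ij) vanish identically. -/
import Mathlib


/-- Partial derivative of a function on `ℝⁿ` in the `t`-th coordinate direction. -/
noncomputable def pd {n : ℕ} (f : (Fin n → ℝ) → ℝ) (t : Fin n) (x : Fin n → ℝ) : ℝ :=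
  fderiv ℝ f x (Pi.single t 1)

/-- Any smooth solution of the Riccati system `∂_p Γˡ_is + Σ_m Γˡ_pm Γᵐ_is = 0` has
identically vanishing curvature
`Rˡ_ijk = ∂_j Γˡ_ik − ∂_k Γˡ_ij + Σ_s (Γˡ_js Γˢ_ik − Γˡ_ks Γˢ_ij)`. -/
theorem riccati_first_implies_curvature_flat {n : ℕ}
    (Γ : (Fin n → ℝ) → Fin n → Fin n → Fin n → ℝ)
    (hsmooth : ∀ l i s : Fin n, ContDiff ℝ (⊤ : ℕ∞) (fun x => Γ x l i s))
    (hriccati : ∀ x, ∀ p l i s : Fin n,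
      pd (fun y => Γ y l i s) p x + ∑ m, Γ x l p m * Γ x m i s = 0) :
    ∀ x, ∀ l i j k : Fin n,
      pd (fun y => Γ y l i k) j x - pd (fun y => Γ y l i j) k x
        + ∑ s, Γ x l j s * Γ x s i k - ∑ s, Γ x l k s * Γ x s i j = 0 := by
  intro x l i j k
  have h1 := hriccati x j l i k
  have h2 := hriccati x k l i j
  linarith
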